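/- Suppose n = 2 and d ≥ 4, and set q = d(d−3)/2 and t = d−3. Then the map δ_{q,t} : ⋀^q S_d ⊗ S_t → ⋀^{q−1} S_d ⊗ S_{t+d} has nonzero kernel. (Equivalently H^0(P^2, ⋀^{d(d−3)/2} E_d(d−3)) ≠ 0; by Serre duality this is the nonvanishing that forces the failure of property N_{3d−2} for the d-uple Veronese surface.) -/

import Mathlib

open TensorProduct

noncomputable section

variable (K : Type*) [Field K]

/-- `S K n e` is the space of homogeneous polynomials of degree `e`
in the `n+1` variables `x_0, …, x_n`. -/
abbrev S (n e : ℕ) : Submodule K (MvPolynomial (Fin (n + 1)) K) :=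
  MvPolynomial.homogeneousSubmodule (Fin (n + 1)) K e

/-- The product of a homogeneous polynomial of degree `d` with one of degree `b`,
viewed as an element of degree `b + d`. -/
def mulSW {n d b : ℕ} (s : S K n d) (w : S K n b) : S K n (b + d) :=
  ⟨(s : MvPolynomial (Fin (n + 1)) K) * (w : MvPolynomial (Fin (n + 1)) K), by
    rw [MvPolynomial.mem_homogeneousSubmodule, Nat.add_comm b d]
    exact ((MvPolynomial.mem_homogeneousSubmodule _ _).1 s.2).mul
      ((MvPolynomial.mem_homogeneousSubmodule _ _).1 w.2)⟩

/-- Identification of spaces of homogeneous polynomials of equal degrees. -/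
def scast {n e₁ e₂ : ℕ} (h : e₁ = e₂) : S K n e₁ ≃ₗ[K] S K n e₂ :=
  LinearEquiv.ofEq _ _ (by rw [h])

/-- The increasing injection `Fin (a-1) → Fin a` omitting `j`. -/
def skipAt {a : ℕ} (j : Fin a) (i : Fin (a - 1)) : Fin a :=
  if (i : ℕ) < (j : ℕ) then ⟨i, by have := i.isLt; omega⟩
  else ⟨(i : ℕ) + 1, by have := i.isLt; omega⟩

/-- The wedge `v 0 ∧ ⋯ ∧ v (a-1)` as an element of the `a`-th exterior power. -/
def wedge {M : Type*} [AddCommGroup M] [Module K M] (a : ℕ) (v : Fin a → M) :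
    ⋀[K]^a M :=
  ⟨ExteriorAlgebra.ιMulti K a v, ExteriorAlgebra.ιMulti_range K a ⟨v, rfl⟩⟩

/-- `IsKoszulMap K n d a b δ` says that `δ : ⋀^a S_d ⊗ S_b → ⋀^{a-1} S_d ⊗ S_{b+d}` is
the Koszul map, i.e. it satisfies
`δ((s_1 ∧ ⋯ ∧ s_a) ⊗ w) = Σ_j (−1)^{j−1} (s_1 ∧ ⋯ ∧ ŝ_j ∧ ⋯ ∧ s_a) ⊗ (s_j·w)`. -/
def IsKoszulMap (n d a b : ℕ)
    (δ : ((⋀[K]^a (S K n d)) ⊗[K] (S K n b)) →ₗ[K]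
         ((⋀[K]^(a - 1) (S K n d)) ⊗[K] (S K n (b + d)))) : Prop :=
  ∀ (s : Fin a → S K n d) (w : S K n b),
    δ (wedge K a s ⊗ₜ[K] w) =
      ∑ j : Fin a, ((-1 : K) ^ (j : ℕ)) •
        ((wedge K (a - 1) fun i => s (skipAt j i)) ⊗ₜ[K] mulSW K (s j) w)

/-- Exactness of the Veronese–Koszul complex at `(i, q)`:
`ker δ_{i,qd} = im δ_{i+1,(q−1)d}` inside `⋀^i S_d ⊗ S_{qd}`. -/
def VKExact (n d i q : ℕ) : Prop :=
  ∀ (h : (q - 1) * d + d = q * d)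
    (δ₁ : ((⋀[K]^i (S K n d)) ⊗[K] (S K n (q * d))) →ₗ[K]
          ((⋀[K]^(i - 1) (S K n d)) ⊗[K] (S K n (q * d + d))))
    (δ₂ : ((⋀[K]^(i + 1) (S K n d)) ⊗[K] (S K n ((q - 1) * d))) →ₗ[K]
          ((⋀[K]^i (S K n d)) ⊗[K] (S K n ((q - 1) * d + d)))),
    IsKoszulMap K n d i (q * d) δ₁ → IsKoszulMap K n d (i + 1) ((q - 1) * d) δ₂ →
    LinearMap.ker δ₁ =
      LinearMap.range
        ((TensorProduct.congr (LinearEquiv.refl K (⋀[K]^i (S K n d)))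
            (scast K h)).toLinearMap ∘ₗ δ₂)

end


-- ==================== auxiliary lemmas ====================
section Helpers

lemma skipAt_val {a : ℕ} (j : Fin a) (i : Fin (a-1)) :
    ((skipAt j i : Fin a) : ℕ) = if (i : ℕ) < (j : ℕ) then (i:ℕ) else (i:ℕ)+1 := by
  unfold skipAt; split_ifs <;> rfl

/-- position of `i` in the complement of `p` -/
def unskip {a : ℕ} (i p : Fin a) (h : (i:ℕ) ≠ (p:ℕ)) : Fin (a-1) :=
  ⟨if (i:ℕ) < (p:ℕ) then (i:ℕ) else (i:ℕ) - 1, by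
    have := i.isLt; have := p.isLt; split_ifs <;> omega⟩

lemma unskip_val {a : ℕ} (i p : Fin a) (h : (i:ℕ) ≠ (p:ℕ)) :
    ((unskip i p h : Fin (a-1)) : ℕ) = if (i:ℕ) < (p:ℕ) then (i:ℕ) else (i:ℕ) - 1 := rfl

lemma skipAt_val_ne {a : ℕ} (i : Fin a) (j : Fin (a-1)) :
    ((skipAt i j : Fin a) : ℕ) ≠ (i : ℕ) := by
  rw [skipAt_val]; split_ifs <;> omega

lemma skipAt_unskip {a : ℕ} (i p : Fin a) (h : (i:ℕ) ≠ (p:ℕ)) :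
    skipAt p (unskip i p h) = i := by
  apply Fin.ext; rw [skipAt_val, unskip_val]
  split_ifs <;> omega

lemma skip_skip {a : ℕ} (i : Fin a) (j : Fin (a-1)) (k : Fin (a-1-1)) :
    skipAt i (skipAt j k) =
      skipAt (skipAt i j) (skipAt (unskip i (skipAt i j) (Ne.symm (skipAt_val_ne i j))) k) := by
  apply Fin.ext
  simp only [skipAt_val, unskip_val]
  have hj := j.isLt; have hk := k.isLt; have hi := i.isLt
  split_ifs <;> omega

lemma skip_parity {a : ℕ} (i : Fin a) (j : Fin (a-1)) :
    (((skipAt i j : Fin a):ℕ)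
        + ((unskip i (skipAt i j) (Ne.symm (skipAt_val_ne i j)) : Fin (a-1)):ℕ)) % 2
      = ((i:ℕ) + (j:ℕ) + 1) % 2 := by
  rw [unskip_val, skipAt_val]
  have := j.isLt
  split_ifs <;> omega

lemma g_invol_snd {a : ℕ} (i : Fin a) (j : Fin (a-1)) (h₁ h₂) :
    unskip (skipAt i j) (skipAt (skipAt i j) (unskip i (skipAt i j) h₁)) h₂ = j := by
  apply Fin.ext; simp only [unskip_val, skipAt_val]
  have := j.isLt
  split_ifs <;> omega

lemma deg3 (f : Fin 3 →₀ ℕ) : f.degree = f 0 + f 1 + f 2 := by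
  rw [Finsupp.degree_apply, Finset.sum_subset (Finset.subset_univ _)
    (fun x _ hx => by rwa [← Finsupp.notMem_support_iff]), Fin.sum_univ_three]

variable {K : Type*} [Field K]

lemma wedge_ne_zero {M : Type*} [AddCommGroup M] [Module K M] {a : ℕ} (v : Fin a → M)
    (Φ : M [⋀^Fin a]→ₗ[K] K) (h : Φ v ≠ 0) : wedge K a v ≠ 0 := by
  intro h0
  apply h
  have h1 : ExteriorAlgebra.ιMulti K a v = 0 := congrArg Subtype.val h0
  have h2 := ExteriorAlgebra.liftAlternating_apply_ιMulti (R := K)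
    (Function.update (fun i => (0 : M [⋀^Fin i]→ₗ[K] K)) a Φ) v
  rw [h1, map_zero, Function.update_self] at h2
  exact h2.symm

end Helpers

set_option maxHeartbeats 4000000 in
set_option synthInstance.maxHeartbeats 1000000 in
/-- for `n = 2`, `d ≥ 4`, `q = d(d−3)/2` and `t = d−3`, the Koszul map
`δ_{q,t} : ⋀^q S_d ⊗ S_t → ⋀^{q−1} S_d ⊗ S_{t+d}` has nonzero kernel. -/
theorem stmt5 (K : Type*) [Field K] [CharZero K] (d : ℕ) (hd : 4 ≤ d)
    (δ : ((⋀[K]^(d * (d - 3) / 2) (S K 2 d)) ⊗[K] (S K 2 (d - 3))) →ₗ[K]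
         ((⋀[K]^(d * (d - 3) / 2 - 1) (S K 2 d)) ⊗[K] (S K 2 (d - 3 + d))))
    (hδ : IsKoszulMap K 2 d (d * (d - 3) / 2) (d - 3) δ) :
    LinearMap.ker δ ≠ ⊥ := by
  classical
  revert hδ
  revert δ
  set t : ℕ := d - 3 with htdef
  set q : ℕ := d * t / 2 with hqdef
  intro δ hδ
  -- basic arithmetic
  have hdt : d = t + 3 := by omega
  have heven : ∃ c, (t+3) * t = c + c := by
    rcases Nat.even_or_odd t with he | ho
    · obtain ⟨r, hr⟩ := he
      exact ⟨(t+3)*r, by rw [hr]; ring⟩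
    · obtain ⟨r, hr⟩ := ho
      exact ⟨(r+2)*t, by rw [hr]; ring⟩
  obtain ⟨c, hc⟩ := heven
  have hq2 : 2 * q = (t + 3) * t := by
    have hdd : d * t = c + c := by rw [hdt]; exact hc
    omega
  -- the finset of exponent pairs
  have hcardJ : ((Finset.range (t+1)).sigma (fun s => Finset.HasAntidiagonal.antidiagonal s)).card = q + 1 := by
    have h1 : ((Finset.range (t+1)).sigma (fun s => Finset.HasAntidiagonal.antidiagonal s)).card
        = ∑ s ∈ Finset.range (t+1), (s+1) := by
      rw [Finset.card_sigma]
      exact Finset.sum_congr rfl fun s _ => Finset.Nat.card_antidiagonal s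
    have h2 : ∑ s ∈ Finset.range (t+1), (s+1) = (∑ s ∈ Finset.range (t+1), s) + (t+1) := by
      rw [Finset.sum_add_distrib, Finset.sum_const, Finset.card_range, smul_eq_mul, mul_one]
    have h3 := Finset.sum_range_id_mul_two (t+1)
    have h4 : (t+1) * (t+1-1) + 2*(t+1) = ((t+3)*t) + 2 := by
      simp only [Nat.add_sub_cancel]; ring
    omega
  -- the enumeration
  obtain ⟨eJ, heJinj⟩ : ∃ f : Fin (q+1) →
      {x // x ∈ (Finset.range (t+1)).sigma (fun s => Finset.HasAntidiagonal.antidiagonal s)},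
      Function.Injective f := by
    refine ⟨fun k => ((Finset.range (t+1)).sigma (fun s => Finset.HasAntidiagonal.antidiagonal s)).equivFin.symm
      (Fin.cast hcardJ.symm k), ?_⟩
    intro k l h
    exact Fin.cast_injective _ (Equiv.injective _ h)
  obtain ⟨A, hAdef⟩ : ∃ f : Fin (q+1) → ℕ, f = fun k => (eJ k : Σ _ : ℕ, ℕ × ℕ).2.1 :=
    ⟨_, rfl⟩
  obtain ⟨B, hBdef⟩ : ∃ f : Fin (q+1) → ℕ, f = fun k => (eJ k : Σ _ : ℕ, ℕ × ℕ).2.2 :=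
    ⟨_, rfl⟩
  have hmem : ∀ k, ((eJ k : Σ _ : ℕ, ℕ × ℕ).1 ∈ Finset.range (t+1) ∧
      (eJ k : Σ _ : ℕ, ℕ × ℕ).2 ∈ Finset.HasAntidiagonal.antidiagonal (eJ k : Σ _ : ℕ, ℕ × ℕ).1) :=
    fun k => Finset.mem_sigma.mp (eJ k).2
  have hABsum : ∀ k, A k + B k = (eJ k : Σ _ : ℕ, ℕ × ℕ).1 := by
    intro k
    rw [hAdef, hBdef]
    exact Finset.HasAntidiagonal.mem_antidiagonal.mp (hmem k).2
  have hABt : ∀ k, A k + B k ≤ t := by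
    intro k
    have h1 := Finset.mem_range.mp (hmem k).1
    have h2 := hABsum k
    omega
  have hABinj : ∀ k l, A k = A l → B k = B l → k = l := by
    intro k l hA hB
    rw [hAdef] at hA
    rw [hBdef] at hB
    apply heJinj
    apply Subtype.ext
    have h2 : (eJ k : Σ _ : ℕ, ℕ × ℕ).2 = (eJ l : Σ _ : ℕ, ℕ × ℕ).2 :=
      Prod.ext hA hB
    have h1 : (eJ k : Σ _ : ℕ, ℕ × ℕ).1 = (eJ l : Σ _ : ℕ, ℕ × ℕ).1 := by
      rw [← hABsum, ← hABsum, hAdef, hBdef] at *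
      rw [hA, hB]
    exact Sigma.ext h1 (heq_of_eq h2)
  -- exponents
  obtain ⟨E, hEdef⟩ : ∃ f : Fin (q+1) → (Fin 3 →₀ ℕ),
      f = fun k => Finsupp.equivFunOnFinite.symm ![A k, B k, t - (A k + B k)] := ⟨_, rfl⟩
  have hEapp : ∀ k (i : Fin 3), E k i = ![A k, B k, t - (A k + B k)] i := by
    intro k i; rw [hEdef]; rfl
  have hEdeg : ∀ k, (E k).degree = t := by
    intro k
    rw [deg3, hEapp, hEapp, hEapp]
    simp only [Matrix.cons_val_zero, Matrix.cons_val_one, Matrix.head_cons,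
      Matrix.cons_val_two, Matrix.tail_cons]
    have := hABt k; omega
  have hEinj : Function.Injective E := by
    intro k l h
    have h0 := congrArg (fun f => (f : (Fin 3 →₀ ℕ)) 0) h
    have h1 := congrArg (fun f => (f : (Fin 3 →₀ ℕ)) 1) h
    simp only [hEapp] at h0 h1
    exact hABinj k l (by simpa using h0) (by simpa using h1)
  -- the degree-d exponents
  obtain ⟨euF, heuFdef⟩ : ∃ f : Fin 3 →₀ ℕ, f = Finsupp.equivFunOnFinite.symm ![1,1,1] :=
    ⟨_, rfl⟩
  have heuFapp : ∀ i : Fin 3, euF i = 1 := by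
    intro i; rw [heuFdef]; fin_cases i <;> rfl
  obtain ⟨D, hDdef⟩ : ∃ f : Fin (q+1) → (Fin 3 →₀ ℕ), f = fun k => euF + E k := ⟨_, rfl⟩
  have hDapp : ∀ k (i : Fin 3), D k i = euF i + E k i := by
    intro k i; rw [hDdef]; simp [Finsupp.add_apply]
  have hDdeg : ∀ k, (D k).degree = d := by
    intro k
    have h := hEdeg k
    rw [deg3] at h
    rw [deg3, hDapp, hDapp, hDapp]
    simp only [heuFapp]
    omega
  have hDinj : Function.Injective D := by
    intro k l h
    apply hEinj
    apply Finsupp.ext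
    intro i
    have h2 := DFunLike.congr_fun h i
    rw [hDapp, hDapp] at h2
    omega
  -- the polynomials
  obtain ⟨m, hmdef⟩ : ∃ f : Fin (q+1) → (S K 2 t),
      f = fun k => (⟨MvPolynomial.monomial (E k) (1:K), by
        rw [MvPolynomial.mem_homogeneousSubmodule]
        exact MvPolynomial.isHomogeneous_monomial _ (hEdeg k)⟩ : S K 2 t) := ⟨_, rfl⟩
  obtain ⟨v, hvdef⟩ : ∃ f : Fin (q+1) → (S K 2 d),
      f = fun k => (⟨MvPolynomial.monomial (D k) (1:K), by
        rw [MvPolynomial.mem_homogeneousSubmodule]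
        exact MvPolynomial.isHomogeneous_monomial _ (hDdeg k)⟩ : S K 2 d) := ⟨_, rfl⟩
  have hmval : ∀ k, ((m k : S K 2 t) : MvPolynomial (Fin 3) K)
      = MvPolynomial.monomial (E k) (1:K) := by
    intro k; rw [hmdef]
  have hvval : ∀ k, ((v k : S K 2 d) : MvPolynomial (Fin 3) K)
      = MvPolynomial.monomial (D k) (1:K) := by
    intro k; rw [hvdef]
  -- the cycle
  obtain ⟨γ, hγdef⟩ : ∃ g : (⋀[K]^q (S K 2 d)) ⊗[K] (S K 2 t),
      g = ∑ i : Fin (q+1), ((-1:K)^(i:ℕ)) •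
        ((wedge K q fun k => v (skipAt i k)) ⊗ₜ[K] m i) := ⟨_, rfl⟩
  have hker : δ γ = 0 := by
    rw [hγdef, map_sum]
    have hterm : ∀ i : Fin (q+1),
        δ (((-1:K)^(i:ℕ)) • ((wedge K q fun k => v (skipAt i k)) ⊗ₜ[K] m i))
        = ∑ j : Fin q, ((-1:K)^((i:ℕ)+(j:ℕ))) •
            ((wedge K (q-1) fun k => v (skipAt i (skipAt j k))) ⊗ₜ[K]
              mulSW K (v (skipAt i j)) (m i)) := by
      intro i
      rw [map_smul, hδ (fun k => v (skipAt i k)) (m i), Finset.smul_sum]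
      exact Finset.sum_congr rfl fun j _ => by rw [smul_smul, ← pow_add]
    rw [Finset.sum_congr rfl fun i _ => hterm i, ← Finset.sum_product',
      Finset.univ_product_univ]
    refine Finset.sum_involution
      (fun x _ =>
        ((skipAt x.1 x.2, unskip x.1 (skipAt x.1 x.2) (Ne.symm (skipAt_val_ne x.1 x.2))) :
          Fin (q+1) × Fin q)) ?_ ?_ (fun a ha => Finset.mem_univ _) ?_
    · rintro ⟨i, j⟩ -
      dsimp only
      have hW : (fun (k : Fin (q-1)) => v (skipAt (skipAt i j)
            (skipAt (unskip i (skipAt i j) (Ne.symm (skipAt_val_ne i j))) k)))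
          = (fun (k : Fin (q-1)) => v (skipAt i (skipAt j k))) := by
        funext k; rw [← skip_skip]
      rw [hW, skipAt_unskip i (skipAt i j) (Ne.symm (skipAt_val_ne i j))]
      have hm : mulSW K (v (skipAt i j)) (m i) = mulSW K (v i) (m (skipAt i j)) := by
        apply Subtype.ext
        show ((v (skipAt i j) : S K 2 d) : MvPolynomial (Fin 3) K) * (m i : MvPolynomial (Fin 3) K)
           = ((v i : S K 2 d) : MvPolynomial (Fin 3) K) * (m (skipAt i j) : MvPolynomial (Fin 3) K)
        rw [hmval, hmval, hvval, hvval, MvPolynomial.monomial_mul, MvPolynomial.monomial_mul]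
        rw [hDdef]
        simp only
        rw [add_right_comm]
      rw [hm]
      have hs : ((-1:K))^(((skipAt i j : Fin (q+1)):ℕ)
            + ((unskip i (skipAt i j) (Ne.symm (skipAt_val_ne i j)) : Fin q):ℕ))
          = -((-1:K))^((i:ℕ)+(j:ℕ)) := by
        rw [neg_one_pow_eq_pow_mod_two, skip_parity i j, ← neg_one_pow_eq_pow_mod_two,
          pow_succ, mul_neg_one]
      rw [hs, ← add_smul, add_neg_cancel, zero_smul]
    · rintro ⟨i, j⟩ - -
      intro he
      exact skipAt_val_ne i j (congrArg Fin.val (congrArg Prod.fst he))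
    · rintro ⟨i, j⟩ -
      dsimp only
      refine Prod.ext ?_ ?_
      · exact skipAt_unskip i (skipAt i j) (Ne.symm (skipAt_val_ne i j))
      · exact g_invol_snd i j (Ne.symm (skipAt_val_ne i j))
          (Ne.symm (skipAt_val_ne (skipAt i j) (unskip i (skipAt i j)
            (Ne.symm (skipAt_val_ne i j)))))
  have hγne : γ ≠ 0 := by
    intro h0
    obtain ⟨ψ, hψdef⟩ : ∃ f : (S K 2 t) →ₗ[K] K,
        f = (MvPolynomial.lcoeff K (E 0)).comp (Submodule.subtype _) := ⟨_, rfl⟩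
    obtain ⟨L, hLdef⟩ : ∃ f : ((⋀[K]^q (S K 2 d)) ⊗[K] (S K 2 t)) →ₗ[K] (⋀[K]^q (S K 2 d)),
        f = (TensorProduct.rid K _).toLinearMap ∘ₗ LinearMap.lTensor _ ψ := ⟨_, rfl⟩
    have hLt : ∀ (x : ⋀[K]^q (S K 2 d)) (y : S K 2 t), L (x ⊗ₜ[K] y) = ψ y • x := by
      intro x y
      rw [hLdef]
      simp only [LinearMap.coe_comp, Function.comp_apply, LinearMap.lTensor_tmul,
        LinearEquiv.coe_coe, TensorProduct.rid_tmul]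
    have hψm : ∀ i, ψ (m i) = if i = 0 then 1 else 0 := by
      intro i
      have h1 : ψ (m i) = MvPolynomial.coeff (E 0) ((m i : S K 2 t) : MvPolynomial (Fin 3) K) := by
        rw [hψdef]; rfl
      rw [h1, hmval, MvPolynomial.coeff_monomial]
      by_cases h : i = 0
      · subst h; rw [if_pos rfl, if_pos rfl]
      · rw [if_neg (fun he => h (hEinj he)), if_neg h]
    have hLγ : L γ = wedge K q fun k => v (skipAt (0 : Fin (q+1)) k) := by
      rw [hγdef, map_sum]
      rw [Finset.sum_eq_single (0 : Fin (q+1))]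
      · rw [map_smul, hLt, hψm]
        simp
      · intro i _ hi
        rw [map_smul, hLt, hψm, if_neg hi, zero_smul, smul_zero]
      · intro h; exact absurd (Finset.mem_univ _) h
    rw [h0, map_zero] at hLγ
    obtain ⟨g0, hg0def⟩ : ∃ f : (S K 2 d) →ₗ[K] (Fin q → K),
        f = LinearMap.pi (fun r => (MvPolynomial.lcoeff K (D (skipAt (0 : Fin (q+1)) r))).comp
          (Submodule.subtype _)) := ⟨_, rfl⟩
    have hg0app : ∀ (x : S K 2 d) (r : Fin q),
        g0 x r = MvPolynomial.coeff (D (skipAt (0 : Fin (q+1)) r)) (x : MvPolynomial (Fin 3) K) := by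
      intro x r; rw [hg0def]; rfl
    have hΦ : (Matrix.detRowAlternating.compLinearMap g0)
        (fun k => v (skipAt (0 : Fin (q+1)) k)) = 1 := by
      rw [AlternatingMap.compLinearMap_apply]
      have hmat : (fun (i : Fin q) => g0 (v (skipAt (0 : Fin (q+1)) i)))
          = (1 : Matrix (Fin q) (Fin q) K) := by
        funext k r
        show g0 (v (skipAt (0 : Fin (q+1)) k)) r = _
        rw [hg0app, hvval, MvPolynomial.coeff_monomial, Matrix.one_apply]
        by_cases h : k = r
        · subst h; rw [if_pos rfl, if_pos rfl]
        · rw [if_neg h, if_neg]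
          intro he
          apply h
          have h4 := congrArg Fin.val (hDinj he)
          rw [skipAt_val, skipAt_val, Fin.val_zero,
            if_neg (Nat.not_lt_zero _), if_neg (Nat.not_lt_zero _)] at h4
          exact Fin.ext (by omega)
      rw [hmat]
      exact Matrix.det_one
    have hΦne : (Matrix.detRowAlternating.compLinearMap g0)
        (fun k => v (skipAt (0 : Fin (q+1)) k)) ≠ 0 := by
      rw [hΦ]; exact one_ne_zero
    exact wedge_ne_zero (K := K) (fun k => v (skipAt (0 : Fin (q+1)) k))
      (Matrix.detRowAlternating.compLinearMap g0) hΦne hLγ.symm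
  exact (Submodule.ne_bot_iff _).mpr ⟨γ, LinearMap.mem_ker.mpr hker, hγne⟩
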